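/- Let $k$ be a field and $A = k[s,t]/(st)$ graded. Define $M$ by $M_n = \prod_{i \ge n} k$ for $n \ge 0$, with $t(x_n, x_{n+1}, \dots) = (0, x_n, x_{n+1}, \dots) \in M_{n-1}$ (shifting the sequence, viewed in degree $n-1$) and $s = 0$. Then $M$ is a graded $A$-module that is not isomorphic to any direct sum of indecomposable graded $A$-modules. -/

import Mathlib

open scoped Classical

namespace Paper

variable (k : Type) [Field k]

/-- A nonnegatively graded module over `A = k[s,t]/(st)`, given componentwise. -/
structure GM where
  M : ℕ → Type
  [acg : ∀ i, AddCommGroup (M i)]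
  [mod : ∀ i, Module k (M i)]
  s : ∀ i, M i →ₗ[k] M (i + 1)
  t : ∀ i, M (i + 1) →ₗ[k] M i
  ts : ∀ i x, t i (s i x) = 0
  st : ∀ i x, s i (t i x) = 0

attribute [instance] GM.acg GM.mod

variable {k}

/-- Morphisms of graded `A`-modules. -/
structure Hom (M N : GM k) where
  f : ∀ i, M.M i →ₗ[k] N.M i
  comm_s : ∀ i x, f (i + 1) (M.s i x) = N.s i (f i x)
  comm_t : ∀ i x, f i (M.t i x) = N.t i (f (i + 1) x)

/-- Isomorphism of graded `A`-modules. -/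
def GMIso (M N : GM k) : Prop := ∃ f : Hom M N, ∀ i, Function.Bijective (f.f i)

/-- A morphism is (componentwise) injective. -/
def InjHom {M N : GM k} (f : Hom M N) : Prop := ∀ i, Function.Injective (f.f i)

/-- Purity of (the image of) a morphism, via the concrete characterization
`sN_i ⊓ P_{i+1} = sP_i` and `tN_{i+1} ⊓ P_i = tP_{i+1}`. -/
def IsPure {M N : GM k} (f : Hom M N) : Prop :=
  ∀ i,
    LinearMap.range (N.s i) ⊓ LinearMap.range (f.f (i + 1)) =
      LinearMap.range ((N.s i).comp (f.f i)) ∧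
    LinearMap.range (N.t i) ⊓ LinearMap.range (f.f i) =
      LinearMap.range ((N.t i).comp (f.f (i + 1)))

/-- Index `(m, I)` of a string module: `0 ≤ m ≤ ∞` and `I ⊆ {1, …, m}`. -/
structure StringIndex where
  m : ℕ∞
  I : Set ℕ
  hI : ∀ i ∈ I, 1 ≤ i ∧ (i : ℕ∞) ≤ m

variable (k)

/-- Degree-`i` component of the `n`-fold suspension of the string module `M(m,I)`:
a copy of `k` if `n ≤ i ≤ n + m`, and `0` otherwise. -/
def SC (n : ℕ) (σ : StringIndex) (i : ℕ) : Submodule k k :=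
  if n ≤ i ∧ (i : ℕ∞) ≤ (n : ℕ∞) + σ.m then ⊤ else ⊥

lemma SC_top (n : ℕ) (σ : StringIndex) (i : ℕ) (h1 : n ≤ i)
    (h2 : (i : ℕ∞) ≤ (n : ℕ∞) + σ.m) : SC k n σ i = ⊤ := by
  simp [SC, h1, h2]

/-- The `s`-multiplication on the suspended string module. -/
noncomputable def smap (n : ℕ) (σ : StringIndex) (i : ℕ) :
    SC k n σ i →ₗ[k] SC k n σ (i + 1) :=
  if h : ((i + 1 : ℕ) : ℕ∞) ≤ (n : ℕ∞) + σ.m ∧ (i + 1 - n) ∈ σ.I then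
    Submodule.inclusion (by
      have h1 : 1 ≤ i + 1 - n := (σ.hI _ h.2).1
      have hn : n ≤ i + 1 := by omega
      rw [SC_top k n σ (i + 1) hn h.1]
      exact le_top)
  else 0

/-- The `t`-multiplication on the suspended string module. -/
noncomputable def tmap (n : ℕ) (σ : StringIndex) (i : ℕ) :
    SC k n σ (i + 1) →ₗ[k] SC k n σ i :=
  if h : n ≤ i ∧ (i + 1 - n) ∉ σ.I then
    Submodule.inclusion (by
      by_cases hc : n ≤ i + 1 ∧ ((i + 1 : ℕ) : ℕ∞) ≤ (n : ℕ∞) + σ.m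
      · have hi : (i : ℕ∞) ≤ (n : ℕ∞) + σ.m :=
          le_trans (by exact_mod_cast Nat.le_succ i) hc.2
        rw [SC_top k n σ i h.1 hi]
        exact le_top
      · have hcc : ¬(((i + 1 : ℕ) : ℕ∞) ≤ (n : ℕ∞) + σ.m) :=
          fun hh => hc ⟨by omega, hh⟩
        have : SC k n σ (i + 1) = ⊥ := by
          rw [SC, if_neg (fun hh => hcc hh.2)]
        rw [this]; exact bot_le)
  else 0

/-- The `n`-fold suspension `Σⁿ M(m, I)` of the string module `M(m, I)`. -/
noncomputable def SM (n : ℕ) (σ : StringIndex) : GM k where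
  M i := SC k n σ i
  s i := smap k n σ i
  t i := tmap k n σ i
  ts i x := by
    by_cases h : ((i + 1 : ℕ) : ℕ∞) ≤ (n : ℕ∞) + σ.m ∧ (i + 1 - n) ∈ σ.I
    · have h' : ¬(n ≤ i ∧ (i + 1 - n) ∉ σ.I) := fun hc => hc.2 h.2
      simp only [tmap, dif_neg h', LinearMap.zero_apply]
    · simp only [smap, dif_neg h, LinearMap.zero_apply, map_zero]
  st i x := by
    by_cases h : n ≤ i ∧ (i + 1 - n) ∉ σ.I
    · have h' : ¬(((i + 1 : ℕ) : ℕ∞) ≤ (n : ℕ∞) + σ.m ∧ (i + 1 - n) ∈ σ.I) :=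
        fun hc => h.2 hc.2
      simp only [smap, dif_neg h', LinearMap.zero_apply]
    · simp only [tmap, dif_neg h, LinearMap.zero_apply, map_zero]

/-- The defining generator `x_i` of the (suspended) string module. -/
def xg (n : ℕ) (σ : StringIndex) (i : ℕ) (h1 : n ≤ i)
    (h2 : (i : ℕ∞) ≤ (n : ℕ∞) + σ.m) : SC k n σ i :=
  ⟨1, by rw [SC_top k n σ i h1 h2]; trivial⟩

variable {k}

/-- A graded module is nontrivial. -/
def Nontriv (M : GM k) : Prop := ∃ i, ∃ x : M.M i, x ≠ 0

/-- Binary direct sum of graded `A`-modules. -/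
def dsum (M N : GM k) : GM k where
  M i := M.M i × N.M i
  s i := (M.s i).prodMap (N.s i)
  t i := (M.t i).prodMap (N.t i)
  ts i x := by cases x with | mk a b => simp [M.ts, N.ts, Prod.ext_iff]
  st i x := by cases x with | mk a b => simp [M.st, N.st, Prod.ext_iff]

/-- Indecomposability of a graded `A`-module. -/
def Indec (M : GM k) : Prop :=
  Nontriv M ∧ ∀ N P : GM k, GMIso M (dsum N P) → ¬(Nontriv N ∧ Nontriv P)

/-- Direct sum of a family of graded `A`-modules. -/
noncomputable def gdsum {ι : Type} (F : ι → GM k) : GM k where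
  M i := Π₀ j : ι, (F j).M i
  s i := DFinsupp.mapRange.linearMap (fun j => (F j).s i)
  t i := DFinsupp.mapRange.linearMap (fun j => (F j).t i)
  ts i x := by
    ext j
    simp [(F j).ts]
  st i x := by
    ext j
    simp [(F j).st]

/-- The (lexicographic-type) well-order on string indices: `t` before `s`. -/
def idxLE (σ τ : StringIndex) : Prop :=
  (σ.m ≤ τ.m ∧ τ.I ∩ {j | (j : ℕ∞) ≤ σ.m} = σ.I) ∨
  (∃ i ∈ τ.I, i ∉ σ.I ∧ σ.I ∩ {j | j < i} = τ.I ∩ {j | j < i})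

end Paper

namespace Paper

/-- The degreewise shift map `(x_n, x_{n+1}, …) ↦ (0, x_n, x_{n+1}, …)`. -/
def shiftMap (k : Type) [Field k] : (ℕ → k) →ₗ[k] (ℕ → k) where
  toFun f := fun j => match j with
    | 0 => 0
    | j + 1 => f j
  map_add' f g := by funext j; cases j <;> simp
  map_smul' c f := by funext j; cases j <;> simp

/-- the module: `M_n = ∏_{i ≥ n} k`, `t` the shift, `s = 0`;
it is a graded `k[s,t]/(st)`-module. -/
def bigProductModule (k : Type) [Field k] : GM k where
  M _ := ℕ → k
  s _ := 0
  t _ := shiftMap k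
  ts i x := by simp
  st i x := by simp


section Aux

variable {k : Type} [Field k]

/-- Composite of `n` `t`-maps, from degree `n` down to degree `0`. -/
def Tn (A : GM k) : ∀ n, A.M n →ₗ[k] A.M 0
  | 0 => LinearMap.id
  | n + 1 => (Tn A n).comp (A.t n)

lemma Tn_succ_apply (A : GM k) (n : ℕ) (x : A.M (n + 1)) :
    Tn A (n + 1) x = Tn A n (A.t n x) := rfl

lemma Tn_injective (A : GM k) (ht : ∀ i, Function.Injective (A.t i)) (n : ℕ) :
    Function.Injective (Tn A n) := by
  induction n with
  | zero => exact fun a b h => h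
  | succ n ih => exact fun a b h => ht n (ih h)

lemma range_Tn_antitone (A : GM k) {n m : ℕ} (h : n ≤ m) :
    LinearMap.range (Tn A m) ≤ LinearMap.range (Tn A n) := by
  induction m, h using Nat.le_induction with
  | base => exact le_rfl
  | succ m hm ih =>
    refine le_trans ?_ ih
    rintro x ⟨y, rfl⟩
    exact ⟨A.t m y, rfl⟩

lemma shiftMap_injective : Function.Injective (shiftMap k) := by
  intro a b h
  funext i
  exact congrFun h (i + 1)

lemma TnM_apply : ∀ (n : ℕ) (x : ℕ → k) (i : ℕ),
    Tn (bigProductModule k) n x i = if i < n then 0 else x (i - n)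
  | 0, x, i => by simp [Tn]; rfl
  | n + 1, x, i => by
    show Tn (bigProductModule k) n ((bigProductModule k).t n x) i = _
    show Tn (bigProductModule k) n (shiftMap k x) i = _
    rw [TnM_apply n (shiftMap k x) i]
    rcases lt_trichotomy i n with h | h | h
    · rw [if_pos h, if_pos (by omega)]
    · subst h
      rw [if_neg (lt_irrefl i), if_pos (by omega)]
      have : i - i = 0 := by omega
      rw [this]
      rfl
    · rw [if_neg (by omega), if_neg (by omega)]
      have h2 : i - n = (i - (n + 1)) + 1 := by omega
      rw [h2]
      rfl

lemma mem_range_TnM {n : ℕ} {x : ℕ → k} :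
    x ∈ LinearMap.range (Tn (bigProductModule k) n) ↔ ∀ i < n, x i = 0 := by
  constructor
  · rintro ⟨y, rfl⟩ i hi
    show Tn (bigProductModule k) n y i = 0
    exact (TnM_apply n y i).trans (if_pos hi)
  · intro h
    refine ⟨fun i => x (i + n), ?_⟩
    show Tn (bigProductModule k) n (fun i => x (i + n)) = x
    funext i
    rw [TnM_apply]
    split
    · exact (h i (by assumption)).symm
    · congr 1; omega

variable {ι : Type} {F : ι → GM k}

/-- Identity coercion from components of `gdsum F` to `DFinsupp`. -/
def toDF {i : ℕ} (y : (gdsum F).M i) : Π₀ j, (F j).M i := y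

@[simp] lemma toDF_zero {i : ℕ} : toDF (0 : (gdsum F).M i) = 0 := rfl

@[simp] lemma toDF_sub {i : ℕ} (y z : (gdsum F).M i) :
    toDF (y - z) = toDF y - toDF z := rfl

lemma gdsum_t_apply (i : ℕ) (y : (gdsum F).M (i + 1)) (j : ι) :
    toDF ((gdsum F).t i y) j = (F j).t i (toDF y j) := by
  show (DFinsupp.mapRange.linearMap (fun j => (F j).t i) (toDF y)) j = _
  simp

lemma gdsum_s_apply (i : ℕ) (y : (gdsum F).M i) (j : ι) :
    toDF ((gdsum F).s i y) j = (F j).s i (toDF y j) := by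
  show (DFinsupp.mapRange.linearMap (fun j => (F j).s i) (toDF y)) j = _
  simp

lemma Tn_gdsum_apply (n : ℕ) (y : (gdsum F).M n) (j : ι) :
    toDF (Tn (gdsum F) n y) j = Tn (F j) n (toDF y j) := by
  induction n with
  | zero => rfl
  | succ n ih =>
    rw [Tn_succ_apply, ih, gdsum_t_apply]
    rfl

lemma gdsum_t_single (i : ℕ) (j : ι) (a : (F j).M (i + 1)) :
    toDF ((gdsum F).t i (DFinsupp.single j a)) = DFinsupp.single j ((F j).t i a) := by
  show DFinsupp.mapRange.linearMap (fun j => (F j).t i) (DFinsupp.single j a) = _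
  simp [DFinsupp.mapRange_single]

lemma Tn_gdsum_single : ∀ (n : ℕ) (j : ι) (a : (F j).M n),
    toDF (Tn (gdsum F) n (DFinsupp.single j a)) = DFinsupp.single j (Tn (F j) n a)
  | 0, _, _ => rfl
  | n + 1, j, a => by
    rw [Tn_succ_apply]
    have h1 : (gdsum F).t n (DFinsupp.single j a)
        = (DFinsupp.single j ((F j).t n a) : Π₀ j, (F j).M n) := gdsum_t_single n j a
    refine (congrArg (fun y => toDF (Tn (gdsum F) n y)) h1).trans ?_
    exact Tn_gdsum_single n j ((F j).t n a)

end Aux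


section Main

variable {k : Type} [Field k] {ι : Type} {F : ι → GM k}
variable (f : Hom (bigProductModule k) (gdsum F)) (hf : ∀ i, Function.Bijective (f.f i))

include f hf

/-- Componentwise inverse of the isomorphism `f`. -/
noncomputable def ginv (i : ℕ) : (gdsum F).M i →ₗ[k] (bigProductModule k).M i :=
  (LinearEquiv.ofBijective (f.f i) (hf i)).symm.toLinearMap

lemma f_ginv (i : ℕ) (y : (gdsum F).M i) : f.f i (ginv f hf i y) = y :=
  (LinearEquiv.ofBijective (f.f i) (hf i)).apply_symm_apply y

lemma ginv_f (i : ℕ) (x : (bigProductModule k).M i) : ginv f hf i (f.f i x) = x :=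
  (LinearEquiv.ofBijective (f.f i) (hf i)).symm_apply_apply x

lemma f_Tn (n : ℕ) (x : (bigProductModule k).M n) :
    f.f 0 (Tn (bigProductModule k) n x) = Tn (gdsum F) n (f.f n x) := by
  induction n with
  | zero => rfl
  | succ n ih =>
    rw [Tn_succ_apply, ih, f.comm_t]
    rfl

lemma gdsum_t_injective (i : ℕ) : Function.Injective ((gdsum F).t i) := by
  have hrepr : ∀ y : (gdsum F).M (i + 1),
      (gdsum F).t i y = f.f i ((bigProductModule k).t i (ginv f hf (i + 1) y)) := by
    intro y
    rw [f.comm_t, f_ginv]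
  intro a b h
  rw [hrepr a, hrepr b] at h
  have h2 : ginv f hf (i + 1) a = ginv f hf (i + 1) b :=
    shiftMap_injective ((hf i).1 h)
  have h3 := congrArg (f.f (i + 1)) h2
  rwa [f_ginv, f_ginv] at h3

lemma Fj_t_injective (j : ι) (i : ℕ) : Function.Injective ((F j).t i) := by
  intro a b h
  have h1 : toDF ((gdsum F).t i (DFinsupp.single j a))
      = toDF ((gdsum F).t i (DFinsupp.single j b)) := by
    rw [gdsum_t_single, gdsum_t_single, h]
  have h2 : (DFinsupp.single j a : (gdsum F).M (i + 1)) = DFinsupp.single j b :=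
    gdsum_t_injective f hf i h1
  have h3 : (DFinsupp.single j a : Π₀ j, (F j).M (i + 1)) = DFinsupp.single j b := h2
  have h4 := DFinsupp.single_injective h3
  exact h4

lemma Fj_Tn_injective (j : ι) (n : ℕ) : Function.Injective (Tn (F j) n) :=
  Tn_injective _ (Fj_t_injective f hf j) n

lemma gdsum_s_zero (i : ℕ) (y : (gdsum F).M i) : (gdsum F).s i y = 0 := by
  have h : (gdsum F).s i y = f.f (i + 1) ((bigProductModule k).s i (ginv f hf i y)) := by
    rw [f.comm_s, f_ginv]
  rw [h]
  have h2 : (bigProductModule k).s i (ginv f hf i y) = 0 := rfl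
  rw [h2, map_zero]

lemma Fj_s_zero (j : ι) (i : ℕ) (a : (F j).M i) : (F j).s i a = 0 := by
  have h := gdsum_s_apply (F := F) i (DFinsupp.single j a) j
  rw [gdsum_s_zero f hf i (DFinsupp.single j a)] at h
  have h0 : toDF (0 : (gdsum F).M (i + 1)) j = 0 := rfl
  have h1 : toDF (DFinsupp.single j a : (gdsum F).M i) j = a := DFinsupp.single_eq_same
  rw [h0, h1] at h
  exact h.symm

lemma exists_adapted_compl (hInd : ∀ j, Indec (F j)) (j : ι) (a b : (F j).M 0)
    (ha : a ≠ 0) (hcon : ∀ c : k, b ≠ c • a) :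
    ∃ A B : Submodule k ((F j).M 0), IsCompl A B ∧ A ≠ ⊥ ∧ B ≠ ⊥ ∧
      ∀ i, LinearMap.range (Tn (F j) i) = ⊤ ∨ LinearMap.range (Tn (F j) i) ≤ B := by
  by_cases hall : ∀ n, LinearMap.range (Tn (F j) n) = ⊤
  · obtain ⟨B, hAB⟩ := Submodule.exists_isCompl (Submodule.span k {a})
    refine ⟨_, B, hAB, ?_, ?_, fun i => Or.inl (hall i)⟩
    · rw [Ne, Submodule.span_singleton_eq_bot]
      exact ha
    · intro hBbot
      have htop : Submodule.span k {a} = ⊤ := by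
        have h1 := codisjoint_iff.mp hAB.codisjoint
        rwa [hBbot, sup_bot_eq] at h1
      have hb : b ∈ Submodule.span k {a} := htop ▸ Submodule.mem_top
      obtain ⟨c, hc⟩ := Submodule.mem_span_singleton.mp hb
      exact hcon c hc.symm
  · push_neg at hall
    set n0 := Nat.find hall with hn0
    have hWn0 : LinearMap.range (Tn (F j) n0) ≠ ⊤ := Nat.find_spec hall
    obtain ⟨v, hv⟩ : ∃ v, v ∉ LinearMap.range (Tn (F j) n0) := by
      by_contra hc
      push_neg at hc
      exact hWn0 (Submodule.eq_top_iff'.mpr hc)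
    have hv0 : v ≠ 0 := fun h => hv (h ▸ (LinearMap.range (Tn (F j) n0)).zero_mem)
    have hvq : (Submodule.Quotient.mk v :
        (F j).M 0 ⧸ LinearMap.range (Tn (F j) n0)) ≠ 0 :=
      fun h => hv ((Submodule.Quotient.mk_eq_zero _).mp h)
    obtain ⟨C, hC⟩ := Submodule.exists_isCompl (Submodule.span k {(Submodule.Quotient.mk v :
        (F j).M 0 ⧸ LinearMap.range (Tn (F j) n0))})
    set B := C.comap (LinearMap.range (Tn (F j) n0)).mkQ with hBdef
    have hWB : LinearMap.range (Tn (F j) n0) ≤ B := by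
      intro w hw
      show (LinearMap.range (Tn (F j) n0)).mkQ w ∈ C
      have : (LinearMap.range (Tn (F j) n0)).mkQ w = 0 := by
        rwa [Submodule.mkQ_apply, Submodule.Quotient.mk_eq_zero]
      rw [this]
      exact C.zero_mem
    have hdisj : Disjoint (Submodule.span k {v}) B := by
      rw [Submodule.disjoint_def]
      intro x hxA hxB
      obtain ⟨c, rfl⟩ := Submodule.mem_span_singleton.mp hxA
      have h1 : (c • Submodule.Quotient.mk v :
          (F j).M 0 ⧸ LinearMap.range (Tn (F j) n0)) ∈ C := by
        have := hxB
        rw [hBdef, Submodule.mem_comap, Submodule.mkQ_apply, Submodule.Quotient.mk_smul] at this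
        exact this
      have h2 : (c • Submodule.Quotient.mk v :
          (F j).M 0 ⧸ LinearMap.range (Tn (F j) n0)) ∈
          Submodule.span k {(Submodule.Quotient.mk v :
            (F j).M 0 ⧸ LinearMap.range (Tn (F j) n0))} :=
        Submodule.smul_mem _ _ (Submodule.mem_span_singleton_self _)
      have h3 := Submodule.disjoint_def.mp hC.disjoint _ h2 h1
      rcases smul_eq_zero.mp h3 with hc0 | hmk
      · rw [hc0, zero_smul]
      · exact absurd hmk hvq
    have hcodisj : Codisjoint (Submodule.span k {v}) B := by
      rw [codisjoint_iff, Submodule.eq_top_iff']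
      intro x
      have hx : (Submodule.Quotient.mk x :
          (F j).M 0 ⧸ LinearMap.range (Tn (F j) n0)) ∈
          Submodule.span k {(Submodule.Quotient.mk v :
            (F j).M 0 ⧸ LinearMap.range (Tn (F j) n0))} ⊔ C := by
        rw [codisjoint_iff.mp hC.codisjoint]
        trivial
      obtain ⟨y, hy, z, hz, hyz⟩ := Submodule.mem_sup.mp hx
      obtain ⟨c, rfl⟩ := Submodule.mem_span_singleton.mp hy
      refine Submodule.mem_sup.mpr ⟨c • v,
        Submodule.smul_mem _ _ (Submodule.mem_span_singleton_self _), x - c • v, ?_, by abel⟩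
      show (LinearMap.range (Tn (F j) n0)).mkQ (x - c • v) ∈ C
      have heq : (LinearMap.range (Tn (F j) n0)).mkQ (x - c • v) = z := by
        rw [map_sub, map_smul, Submodule.mkQ_apply, Submodule.mkQ_apply, ← hyz]
        abel
      rw [heq]
      exact hz
    refine ⟨Submodule.span k {v}, B, ⟨hdisj, hcodisj⟩, ?_, ?_, ?_⟩
    · rw [Ne, Submodule.span_singleton_eq_bot]
      exact hv0
    · intro hBbot
      have htop : Submodule.span k {v} = ⊤ := by
        have h1 := codisjoint_iff.mp hcodisj
        rwa [hBbot, sup_bot_eq] at h1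
      obtain ⟨c1, hc1⟩ := Submodule.mem_span_singleton.mp (htop ▸ Submodule.mem_top : a ∈ _)
      obtain ⟨c2, hc2⟩ := Submodule.mem_span_singleton.mp (htop ▸ Submodule.mem_top : b ∈ _)
      have hc1ne : c1 ≠ 0 := by
        rintro rfl
        rw [zero_smul] at hc1
        exact ha hc1.symm
      refine hcon (c2 * c1⁻¹) ?_
      rw [← hc2, ← hc1, smul_smul, mul_assoc, inv_mul_cancel₀ hc1ne, mul_one]
    · intro i
      by_cases hi : LinearMap.range (Tn (F j) i) = ⊤
      · exact Or.inl hi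
      · refine Or.inr (le_trans ?_ hWB)
        exact range_Tn_antitone _ (Nat.find_min' hall hi)

lemma dim0 (hInd : ∀ j, Indec (F j)) (j : ι) (a b : (F j).M 0) (ha : a ≠ 0) :
    ∃ c : k, b = c • a := by
  by_contra hcon
  push_neg at hcon
  obtain ⟨A, B, hAB, hA, hB, hadapt⟩ := exists_adapted_compl f hf hInd j a b ha hcon
  set p := A.linearProjOfIsCompl B hAB with hp
  set q := B.linearProjOfIsCompl A hAB.symm with hq
  have hpW : ∀ (i : ℕ) (x : (F j).M i),
      (p (Tn (F j) i x) : (F j).M 0) ∈ LinearMap.range (Tn (F j) i) := by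
    intro i x
    rcases hadapt i with h | h
    · rw [h]; trivial
    · have hx : Tn (F j) i x ∈ B := h ⟨x, rfl⟩
      rw [show p (Tn (F j) i x) = 0 from Submodule.projectionOnto_apply_of_mem_right hAB hx]
      exact Submodule.zero_mem _
  have hqW : ∀ (i : ℕ) (x : (F j).M i),
      (q (Tn (F j) i x) : (F j).M 0) ∈ LinearMap.range (Tn (F j) i) := by
    intro i x
    rcases hadapt i with h | h
    · rw [h]; trivial
    · have hx : Tn (F j) i x ∈ B := h ⟨x, rfl⟩
      have h2 : q (Tn (F j) i x) = ⟨Tn (F j) i x, hx⟩ :=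
        Submodule.linearProjOfIsCompl_apply_left hAB.symm ⟨Tn (F j) i x, hx⟩
      rw [h2]
      exact ⟨x, rfl⟩
  have hWle : ∀ i, (LinearMap.range (Tn (F j) (i + 1)) ⊓ A : Submodule k ((F j).M 0))
      ≤ LinearMap.range (Tn (F j) i) ⊓ A :=
    fun i => inf_le_inf_right A (range_Tn_antitone _ (Nat.le_succ i))
  have hWleB : ∀ i, (LinearMap.range (Tn (F j) (i + 1)) ⊓ B : Submodule k ((F j).M 0))
      ≤ LinearMap.range (Tn (F j) i) ⊓ B :=
    fun i => inf_le_inf_right B (range_Tn_antitone _ (Nat.le_succ i))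
  set N : GM k := {
    M := fun i => ↥(LinearMap.range (Tn (F j) i) ⊓ A)
    s := fun _ => 0
    t := fun i => Submodule.inclusion (hWle i)
    ts := fun i x => by simp
    st := fun i x => rfl } with hN
  set P : GM k := {
    M := fun i => ↥(LinearMap.range (Tn (F j) i) ⊓ B)
    s := fun _ => 0
    t := fun i => Submodule.inclusion (hWleB i)
    ts := fun i x => by simp
    st := fun i x => rfl } with hP
  have hmemA : ∀ (i : ℕ) (x : (F j).M i),
      ((A.subtype.comp p).comp (Tn (F j) i)) x ∈ LinearMap.range (Tn (F j) i) ⊓ A :=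
    fun i x => ⟨hpW i x, (p (Tn (F j) i x)).2⟩
  have hmemB : ∀ (i : ℕ) (x : (F j).M i),
      ((B.subtype.comp q).comp (Tn (F j) i)) x ∈ LinearMap.range (Tn (F j) i) ⊓ B :=
    fun i x => ⟨hqW i x, (q (Tn (F j) i x)).2⟩
  set φ : ∀ i, (F j).M i →ₗ[k] (dsum N P).M i := fun i =>
    (LinearMap.codRestrict _ _ (hmemA i)).prod (LinearMap.codRestrict _ _ (hmemB i)) with hφ
  have hcommt : ∀ (i : ℕ) (x : (F j).M (i + 1)),
      φ i ((F j).t i x) = (dsum N P).t i (φ (i + 1) x) := fun i x => rfl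
  have hcomms : ∀ (i : ℕ) (x : (F j).M i),
      φ (i + 1) ((F j).s i x) = (dsum N P).s i (φ i x) := by
    intro i x
    rw [Fj_s_zero f hf j i x, map_zero]
    rfl
  have hbij : ∀ i, Function.Bijective (φ i) := by
    intro i
    constructor
    · intro x y hxy
      apply Fj_Tn_injective f hf j i
      have h1 : (p (Tn (F j) i x) : (F j).M 0) = p (Tn (F j) i y) :=
        congrArg (fun z => ((Prod.fst z : ↥(LinearMap.range (Tn (F j) i) ⊓ A)) :
          (F j).M 0)) hxy
      have h2 : (q (Tn (F j) i x) : (F j).M 0) = q (Tn (F j) i y) :=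
        congrArg (fun z => ((Prod.snd z : ↥(LinearMap.range (Tn (F j) i) ⊓ B)) :
          (F j).M 0)) hxy
      calc Tn (F j) i x
          = (p (Tn (F j) i x) : (F j).M 0) + q (Tn (F j) i x) :=
            (Submodule.projection_add_projection_eq_self hAB _).symm
        _ = (p (Tn (F j) i y) : (F j).M 0) + q (Tn (F j) i y) := by rw [h1, h2]
        _ = Tn (F j) i y :=
            Submodule.projection_add_projection_eq_self hAB _
    · rintro ⟨⟨aa, haa⟩, ⟨bb, hbb⟩⟩
      obtain ⟨x, hx⟩ := LinearMap.mem_range.mp (add_mem haa.1 hbb.1)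
      refine ⟨x, ?_⟩
      have hpa : (p (Tn (F j) i x) : (F j).M 0) = aa := by
        rw [hx, map_add]
        have e1 : p aa = ⟨aa, haa.2⟩ :=
          Submodule.linearProjOfIsCompl_apply_left hAB ⟨aa, haa.2⟩
        have e2 : p bb = 0 :=
          Submodule.projectionOnto_apply_of_mem_right hAB hbb.2
        rw [e1, e2, add_zero]
      have hqb : (q (Tn (F j) i x) : (F j).M 0) = bb := by
        rw [hx, map_add]
        have e1 : q bb = ⟨bb, hbb.2⟩ :=
          Submodule.linearProjOfIsCompl_apply_left hAB.symm ⟨bb, hbb.2⟩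
        have e2 : q aa = 0 :=
          Submodule.projectionOnto_apply_of_mem_right hAB.symm haa.2
        rw [e1, e2, zero_add]
      exact Prod.ext (Subtype.ext hpa) (Subtype.ext hqb)
  obtain ⟨a', ha'A, ha'0⟩ := (Submodule.ne_bot_iff A).mp hA
  obtain ⟨b', hb'B, hb'0⟩ := (Submodule.ne_bot_iff B).mp hB
  refine (hInd j).2 N P ⟨⟨φ, hcomms, hcommt⟩, hbij⟩
    ⟨⟨0, ⟨a', ⟨⟨a', rfl⟩, ha'A⟩⟩, ?_⟩, ⟨0, ⟨b', ⟨⟨b', rfl⟩, hb'B⟩⟩, ?_⟩⟩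
  · intro h
    exact ha'0 (Subtype.ext_iff.mp h)
  · intro h
    exact hb'0 (Subtype.ext_iff.mp h)

lemma dim_le_one (hInd : ∀ j, Indec (F j)) (j : ι) (i : ℕ) (a b : (F j).M i)
    (ha : a ≠ 0) : ∃ c : k, b = c • a := by
  have haT : Tn (F j) i a ≠ 0 := fun h => ha (Fj_Tn_injective f hf j i (by rw [h, map_zero]))
  obtain ⟨c, hc⟩ := dim0 f hf hInd j (Tn (F j) i a) (Tn (F j) i b) haT
  refine ⟨c, Fj_Tn_injective f hf j i ?_⟩
  rw [map_smul]
  exact hc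

lemma zero_mono (j : ι) {i i' : ℕ} (h : i ≤ i') (hz : ∀ a : (F j).M i, a = 0) :
    ∀ a : (F j).M i', a = 0 := by
  induction i', h using Nat.le_induction with
  | base => exact hz
  | succ m hm ih =>
    intro a
    exact Fj_t_injective f hf j m (by rw [ih ((F j).t m a), map_zero])

lemma exists_jn (hInd : ∀ j, Indec (F j)) (n : ℕ) :
    ∃ (j : ι) (v : (F j).M 0),
      v ∈ LinearMap.range (Tn (F j) n) ∧ v ≠ 0 ∧ ∀ a : (F j).M (n + 1), a = 0 := by
  classical
  set w : ℕ → k := fun i => if i = n then 1 else 0 with hwdef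
  have hw1 : w ∈ LinearMap.range (Tn (bigProductModule k) n) := by
    refine mem_range_TnM.mpr fun i hi => ?_
    rw [hwdef]
    simp only []
    rw [if_neg (by omega)]
  have hw2 : w ∉ LinearMap.range (Tn (bigProductModule k) (n + 1)) := by
    intro h
    have := mem_range_TnM.mp h n (by omega)
    rw [hwdef] at this
    simp only [if_pos rfl] at this
    exact one_ne_zero this
  set y := f.f 0 w with hy
  have hy1 : y ∈ LinearMap.range (Tn (gdsum F) n) := by
    obtain ⟨z, hz⟩ := hw1
    exact ⟨f.f n z, by rw [← f_Tn f hf, hz]⟩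
  have hy2 : ∃ j, toDF y j ∉ LinearMap.range (Tn (F j) (n + 1)) := by
    by_contra hc
    push_neg at hc
    set pick : ∀ jj, (F jj).M 0 → (F jj).M (n + 1) := fun jj c =>
      if h : ∃ z, Tn (F jj) (n + 1) z = c then h.choose else 0 with hpick
    have hpick0 : ∀ jj, pick jj 0 = 0 := by
      intro jj
      rw [hpick]
      simp only []
      rw [dif_pos ⟨0, map_zero _⟩]
      apply Fj_Tn_injective f hf jj (n + 1)
      rw [map_zero]
      exact (⟨0, map_zero _⟩ : ∃ z, Tn (F jj) (n + 1) z = 0).choose_spec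
    set z : Π₀ jj, (F jj).M (n + 1) := DFinsupp.mapRange pick hpick0 (toDF y) with hzdef
    have hzy : Tn (gdsum F) (n + 1) z = y := by
      have : ∀ jj, toDF (Tn (gdsum F) (n + 1) z) jj = toDF y jj := by
        intro jj
        rw [Tn_gdsum_apply (n + 1) z jj]
        have h1 : toDF (z : (gdsum F).M (n + 1)) jj = pick jj (toDF y jj) :=
          DFinsupp.mapRange_apply pick hpick0 (toDF y) jj
        have hcc : ∃ zz, Tn (F jj) (n + 1) zz = toDF y jj := hc jj
        rw [h1, hpick]
        simp only []
        rw [dif_pos hcc]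
        exact hcc.choose_spec
      exact DFinsupp.ext this
    apply hw2
    refine ⟨ginv f hf (n + 1) z, ?_⟩
    apply (hf 0).1
    rw [f_Tn f hf, f_ginv f hf (n + 1) z, hzy]
  obtain ⟨j, hj⟩ := hy2
  have hvmem : toDF y j ∈ LinearMap.range (Tn (F j) n) := by
    obtain ⟨z', hz'⟩ := hy1
    refine ⟨toDF z' j, ?_⟩
    rw [← Tn_gdsum_apply, hz']
  have hvne : toDF y j ≠ 0 := fun h => hj (h ▸ Submodule.zero_mem _)
  refine ⟨j, toDF y j, hvmem, hvne, ?_⟩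
  intro a
  by_contra hane
  obtain ⟨u, hu⟩ := LinearMap.mem_range.mp hvmem
  have hta : (F j).t n a ≠ 0 := fun h =>
    hane (Fj_t_injective f hf j n (by rw [h, map_zero]))
  obtain ⟨c, hcu⟩ := dim_le_one f hf hInd j n ((F j).t n a) u hta
  apply hj
  refine ⟨c • a, ?_⟩
  rw [map_smul, Tn_succ_apply, ← map_smul, ← hcu, hu]

end Main

/-- the module `M` with `M_n = ∏_{i ≥ n} k`, `t` the shift and
`s = 0` is not isomorphic to any direct sum of indecomposable graded modules. -/
theorem big_product_not_sum_of_indecomposables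
    (k : Type) [Field k] :
    ¬ ∃ (ι : Type) (F : ι → GM k),
        (∀ j, Indec (F j)) ∧ GMIso (bigProductModule k) (gdsum F) := by
  rintro ⟨ι, F, hInd, f, hf⟩
  classical
  choose J v hv1 hv2 hv3 using exists_jn f hf hInd
  have hJd : ∀ {n m : ℕ}, n < m → J n ≠ J m := by
    intro n m hnm hJ
    have hz : ∀ a : (F (J n)).M m, a = 0 := zero_mono f hf (J n) (by omega) (hv3 n)
    have hz' : ∀ a : (F (J m)).M m, a = 0 := hJ ▸ hz
    obtain ⟨uu, huu⟩ := LinearMap.mem_range.mp (hv1 m)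
    apply hv2 m
    rw [← huu, hz' uu, map_zero]
  have hJinj : Function.Injective J := by
    intro n m h
    rcases Nat.lt_trichotomy n m with hlt | he | hgt
    · exact absurd h (hJd hlt)
    · exact he
    · exact absurd h.symm (hJd hgt)
  choose u hu using fun n => LinearMap.mem_range.mp (hv1 n)
  set U : ∀ n, (gdsum F).M n :=
    fun n => (DFinsupp.single (J n) (u n) : Π₀ jj, (F jj).M n) with hU
  set a : ℕ → (ℕ → k) := fun n => Tn (bigProductModule k) n (ginv f hf n (U n)) with ha
  have ha0 : ∀ n i, i < n → a n i = 0 := by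
    intro n i hi
    exact mem_range_TnM.mp ⟨ginv f hf n (U n), rfl⟩ i hi
  have hfa : ∀ n, f.f 0 (a n) = Tn (gdsum F) n (U n) := by
    intro n
    rw [ha]
    simp only []
    rw [f_Tn f hf, f_ginv]
  have hUa : ∀ n, toDF (Tn (gdsum F) n (U n)) = DFinsupp.single (J n) (v n) := by
    intro n
    rw [hU]
    simp only []
    rw [Tn_gdsum_single, hu]
  set x : ℕ → k := fun i => ∑ n ∈ Finset.range (i + 1), a n i with hx
  have hkey : ∀ N, x - (∑ n ∈ Finset.range (N + 1), a n) ∈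
      LinearMap.range (Tn (bigProductModule k) (N + 1)) := by
    intro N
    refine mem_range_TnM.mpr fun i hi => ?_
    have h1 : (x - ∑ n ∈ Finset.range (N + 1), a n) i
        = x i - ∑ n ∈ Finset.range (N + 1), a n i := by
      rw [Pi.sub_apply, Finset.sum_apply]
    rw [h1, hx]
    simp only []
    rw [sub_eq_zero]
    refine Finset.sum_subset (Finset.range_subset_range.mpr (by omega)) ?_
    intro n hn1 hn2
    rw [Finset.mem_range, not_lt] at hn2
    exact ha0 n i (by omega)
  have hcomp : ∀ N, toDF (f.f 0 x) (J N) = v N := by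
    intro N
    obtain ⟨zz, hzz⟩ := hkey N
    have h2 : f.f 0 x - ∑ n ∈ Finset.range (N + 1), Tn (gdsum F) n (U n)
        = Tn (gdsum F) (N + 1) (f.f (N + 1) zz) := by
      rw [← f_Tn f hf, hzz, show f.f 0 (x - ∑ n ∈ Finset.range (N + 1), a n) = f.f 0 x - f.f 0 (∑ n ∈ Finset.range (N + 1), a n) from map_sub _ _ _,
        show f.f 0 (∑ n ∈ Finset.range (N + 1), a n) = ∑ n ∈ Finset.range (N + 1), f.f 0 (a n) from map_sum _ _ _]
      congr 1
      exact Finset.sum_congr rfl fun n _ => (hfa n).symm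
    have h3 := congrArg (fun yy : (gdsum F).M 0 => toDF yy (J N)) h2
    have hR : toDF (Tn (gdsum F) (N + 1) (f.f (N + 1) zz)) (J N) = 0 := by
      rw [Tn_gdsum_apply, hv3 N (toDF (f.f (N + 1) zz) (J N)), map_zero]
    have hsum : toDF (∑ n ∈ Finset.range (N + 1), Tn (gdsum F) n (U n))
        = ∑ n ∈ Finset.range (N + 1),
            (DFinsupp.single (J n) (v n) : Π₀ jj, (F jj).M 0) := by
      have e1 : toDF (∑ n ∈ Finset.range (N + 1), Tn (gdsum F) n (U n))
          = ∑ n ∈ Finset.range (N + 1), toDF (Tn (gdsum F) n (U n)) := rfl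
      rw [e1]
      exact Finset.sum_congr rfl fun n _ => hUa n
    have hL : toDF (f.f 0 x - ∑ n ∈ Finset.range (N + 1), Tn (gdsum F) n (U n)) (J N)
        = toDF (f.f 0 x) (J N) - v N := by
      rw [toDF_sub, DFinsupp.sub_apply, hsum, DFinsupp.finset_sum_apply]
      congr 1
      rw [Finset.sum_eq_single_of_mem N (Finset.self_mem_range_succ N)]
      · exact DFinsupp.single_eq_same
      · intro n hn1 hn2
        have : n < N := by
          rw [Finset.mem_range] at hn1
          omega
        exact DFinsupp.single_eq_of_ne (hJd this).symm
    rw [hL, hR, sub_eq_zero] at h3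
    exact h3
  have hmem : ∀ N, J N ∈ (toDF (f.f 0 x)).support := fun N =>
    DFinsupp.mem_support_iff.mpr (by rw [hcomp N]; exact hv2 N)
  exact Set.infinite_of_injective_forall_mem hJinj
    (fun N => Finset.mem_coe.mpr (hmem N)) (Finset.finite_toSet _)

end Paper
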